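/- Let q be an eventual period of R. Then the set of recurrent points of R equals {x ∈ X : x ∈ R^q(x)}. -/
import Mathlib


open Set Pointwise

variable {X : Type*}

def relComp (S R : Set (X × X)) : Set (X × X) :=
  {p | ∃ y, (p.1, y) ∈ R ∧ (y, p.2) ∈ S}

def relPow (R : Set (X × X)) : ℕ → Set (X × X)
  | 0 => {p | p.1 = p.2}
  | n + 1 => relComp R (relPow R n)

def relPer (R : Set (X × X)) : Set ℕ :=
  {q | 0 < q ∧ ∃ N, ∀ n ≥ N, relPow R (q + n) = relPow R n}

def relRecurrent (R : Set (X × X)) (x : X) : Prop :=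
  ∃ n, 1 ≤ n ∧ (x, x) ∈ relPow R n

lemma relPow_add (R : Set (X × X)) (m n : ℕ) :
    relPow R (m + n) = relComp (relPow R m) (relPow R n) := by
  induction m with
  | zero =>
    ext ⟨a, b⟩
    simp only [Nat.zero_add, relComp, relPow, Set.mem_setOf_eq]
    constructor
    · intro h; exact ⟨b, h, rfl⟩
    · rintro ⟨y, hy, rfl⟩; exact hy
  | succ m ih =>
    have : m + 1 + n = (m + n) + 1 := by omega
    rw [this]
    ext ⟨a, b⟩
    constructor
    · rintro ⟨y, hy, hmem⟩
      rw [ih] at hy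
      obtain ⟨z, hz1, hz2⟩ := hy
      exact ⟨z, hz1, y, hz2, hmem⟩
    · rintro ⟨z, hz1, y, hz2, hmem⟩
      refine ⟨y, ?_, hmem⟩
      rw [ih]
      exact ⟨z, hz1, hz2⟩

lemma relPow_mul_q (R : Set (X × X)) (q : ℕ)
    (hev : relPow R (q + q) = relPow R q) :
    ∀ k, relPow R ((k + 1) * q) = relPow R q := by
  intro k
  induction k with
  | zero => simp
  | succ k ih =>
    have : (k + 1 + 1) * q = q + (k + 1) * q := by ring
    rw [this, relPow_add, ih, ← relPow_add, hev]

theorem stmt8 [Finite X] (R : Set (X × X)) (q : ℕ) (hq : 0 < q)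
    (hev : relPow R (q + q) = relPow R q) :
    {x | relRecurrent R x} = {x | (x, x) ∈ relPow R q} := by
  ext x
  simp only [Set.mem_setOf_eq]
  constructor
  · rintro ⟨n, hn, hx⟩
    -- (x,x) ∈ relPow R (q * n)
    have hdiag : ∀ k, (x, x) ∈ relPow R ((k + 1) * n) := by
      intro k
      induction k with
      | zero => simpa using hx
      | succ k ih =>
        have : (k + 1 + 1) * n = n + (k + 1) * n := by ring
        rw [this, relPow_add]
        exact ⟨x, ih, hx⟩
    have h1 : (x, x) ∈ relPow R (n * q) := by
      have := hdiag (q - 1)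
      have hq' : (q - 1 + 1) * n = n * q := by
        have : q - 1 + 1 = q := Nat.succ_pred_eq_of_pos hq
        rw [this]; ring
      rwa [hq'] at this
    have h2 : relPow R (n * q) = relPow R q := by
      have := relPow_mul_q R q hev (n - 1)
      have hn' : (n - 1 + 1) * q = n * q := by
        have : n - 1 + 1 = n := Nat.succ_pred_eq_of_pos hn
        rw [this]
      rwa [hn'] at this
    rwa [h2] at h1
  · intro h
    exact ⟨q, hq, h⟩
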